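/- Let G be a connected simple undirected graph on n ≥ 4 vertices with m edges and degree sequence d₁ ≥ d₂ ≥ … ≥ d_n, let μ₁ ≥ μ₂ ≥ … ≥ μ_n = 0 be the eigenvalues of its Laplacian matrix, and assume μ₁ ≥ 1 + d₁ and μ₂ ≥ d₂ (both of which hold for every connected graph) and (n−2) d₂ ≥ 2m − 1 − d₁. Then the Kirchhoff index satisfies Kf(G) ≥ n ( 1/(1+d₁) + 1/d₂ + (n−3)²/(2m−1−d₁−d₂) ). -/

import Mathlib

/-!
Write `k = n - 3`. Connectivity makes `μ_n` the only zero Laplacian eigenvalue, and the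
others sum to `tr L = 2m`, so Cauchy–Schwarz bounds the tail `∑_{3 ≤ i < n} 1/μ_i` below by
`k² / (2m - μ₁ - μ₂)`. The function `t ↦ 1/t + k²/(C - t)` is increasing on `[C/(k+1), C)`,
and the hypothesis `(n-2) d₂ ≥ 2m - 1 - d₁` keeps both moves inside that interval: replacing
`μ₂` by `d₂` and then `μ₁` by `1 + d₁` can only decrease `1/μ₁ + 1/μ₂ + k²/(2m - μ₁ - μ₂)`.
-/

open Finset Polynomial

theorem monotoneOn_one_div_add_sq_div_sub {k C : ℝ} (hk : 0 ≤ k) :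
    MonotoneOn (fun t => 1 / t + k ^ 2 / (C - t)) (Set.Ico (C / (k + 1)) C) := by
  rintro t₁ ⟨ht₁, ht₁C⟩ t₂ ⟨ht₂, ht₂C⟩ h12
  rw [div_le_iff₀ (by linarith)] at ht₁ ht₂
  have ht₁pos : 0 < t₁ := by nlinarith
  have ht₂pos : 0 < t₂ := ht₁pos.trans_le h12
  have hC₁ : 0 < C - t₁ := sub_pos.2 ht₁C
  have hC₂ : 0 < C - t₂ := sub_pos.2 ht₂C
  have hprod : (C - t₁) * (C - t₂) ≤ k ^ 2 * (t₁ * t₂) := by nlinarith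
  have hdiff : 1 / t₂ + k ^ 2 / (C - t₂) - (1 / t₁ + k ^ 2 / (C - t₁)) =
      (t₂ - t₁) * (k ^ 2 * (t₁ * t₂) - (C - t₁) * (C - t₂)) /
        (t₁ * t₂ * (C - t₁) * (C - t₂)) := by
    field_simp
    ring
  rw [← sub_nonneg, hdiff]
  exact div_nonneg (mul_nonneg (sub_nonneg.2 h12) (sub_nonneg.2 hprod)) (by positivity)

theorem one_div_add_one_div_add_sq_div_le {p q a b t s k : ℝ} (hk : 0 ≤ k) (hqp : q ≤ p)
    (hpa : p ≤ a) (hqb : q ≤ b) (ht : 0 < t) (hs : a + b + t = s) (hspq : s - p - q ≤ k * q) :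
    1 / p + 1 / q + k ^ 2 / (s - p - q) ≤ 1 / a + 1 / b + k ^ 2 / t := by
  have hmem {C t : ℝ} (h : C - t ≤ k * t) : C / (k + 1) ≤ t := by
    rw [div_le_iff₀ (by linarith)]
    linarith
  have hq_b : 1 / q + k ^ 2 / (s - p - q) ≤ 1 / b + k ^ 2 / (s - p - b) :=
    monotoneOn_one_div_add_sq_div_sub (C := s - p) hk ⟨hmem hspq, by linarith⟩
      ⟨hmem (by nlinarith), by linarith⟩ hqb
  have hp_a : 1 / p + k ^ 2 / (s - b - p) ≤ 1 / a + k ^ 2 / (s - b - a) :=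
    monotoneOn_one_div_add_sq_div_sub (C := s - b) hk ⟨hmem (by nlinarith), by linarith⟩
      ⟨hmem (by nlinarith), by linarith⟩ hpa
  rw [sub_right_comm s b p, show s - b - a = t by linarith] at hp_a
  linarith

theorem sq_card_div_sum_le_sum_one_div {ι : Type*} (s : Finset ι) {x : ι → ℝ}
    (hx : ∀ i ∈ s, 0 < x i) : (#s : ℝ) ^ 2 / ∑ i ∈ s, x i ≤ ∑ i ∈ s, 1 / x i := by
  simpa using sq_sum_div_le_sum_sq_div s (fun _ => (1 : ℝ)) hx

theorem Fintype.card_subtype_eq_count_map {ι α : Type*} [Fintype ι] [DecidableEq α]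
    (f : ι → α) (a : α) : Fintype.card {i // f i = a} = (univ.val.map f).count a := by
  rw [Multiset.count_map, Fintype.card_subtype]
  simp only [eq_comm]
  rfl

theorem Fin.sum_filter_val_lt_pred {M : Type*} [AddCommMonoid M] {n : ℕ} (hn : 3 ≤ n)
    (f : Fin n → M) :
    ∑ i ∈ univ.filter (fun i : Fin n => (i : ℕ) < n - 1), f i =
      f ⟨0, by omega⟩ + f ⟨1, by omega⟩ + ∑ i ∈ Ioo ⟨1, by omega⟩ ⟨n - 1, by omega⟩, f i := by
  have hsplit : univ.filter (fun i : Fin n => (i : ℕ) < n - 1) =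
      insert ⟨0, by omega⟩ (insert ⟨1, by omega⟩ (Ioo ⟨1, by omega⟩ ⟨n - 1, by omega⟩)) := by
    ext i
    simp only [mem_filter, mem_univ, true_and, mem_insert, mem_Ioo, Fin.ext_iff, Fin.lt_def]
    omega
  rw [hsplit, sum_insert (by simp [Fin.ext_iff, Fin.lt_def]), sum_insert (by simp), add_assoc]

theorem Matrix.IsHermitian.map_eigenvalues_eq_of_charpoly_eq_prod {ι : Type*} [Fintype ι]
    [DecidableEq ι] {A : Matrix ι ι ℝ} (hA : A.IsHermitian) {μ : ι → ℝ}
    (h : A.charpoly = ∏ i, (X - C (μ i))) :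
    univ.val.map hA.eigenvalues = univ.val.map μ := by
  have := hA.roots_charpoly_eq_eigenvalues
  rw [h, roots_prod _ _ (prod_ne_zero_iff.2 fun i _ => X_sub_C_ne_zero _)] at this
  simpa using this.symm

namespace SimpleGraph

variable {V : Type*} [Fintype V] [DecidableEq V] (G : SimpleGraph V) [DecidableRel G.Adj]

theorem trace_lapMatrix (R : Type*) [Ring R] : (G.lapMatrix R).trace = 2 * #G.edgeFinset := by
  rw [lapMatrix, Matrix.trace_sub, trace_adjMatrix, sub_zero, degMatrix, Matrix.trace_diagonal,
    ← Nat.cast_sum, sum_degrees_eq_twice_card_edges]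
  push_cast
  rfl

theorem card_zero_eigenvalues_lapMatrix :
    Fintype.card {i // (G.isHermitian_lapMatrix ℝ).eigenvalues i = 0} =
      Fintype.card G.ConnectedComponent := by
  have hrank := (G.isHermitian_lapMatrix ℝ).rank_eq_card_non_zero_eigs
  rw [Matrix.rank, Fintype.card_subtype_compl] at hrank
  have hnullity := (G.lapMatrix ℝ).mulVecLin.finrank_range_add_finrank_ker
  rw [Module.finrank_fintype_fun_eq_card] at hnullity
  have := Fintype.card_subtype_le fun i => (G.isHermitian_lapMatrix ℝ).eigenvalues i = 0
  rw [card_connectedComponent_eq_finrank_ker_toLin'_lapMatrix, Matrix.toLin'_apply']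
  omega

def HasLapEigenvalues (μ : V → ℝ) : Prop :=
  (G.lapMatrix ℝ).charpoly = ∏ v, (X - C (μ v))

namespace HasLapEigenvalues

variable {G} {μ : V → ℝ} (hμ : G.HasLapEigenvalues μ)
include hμ

theorem map_eq : univ.val.map μ = univ.val.map (G.isHermitian_lapMatrix ℝ).eigenvalues :=
  ((G.isHermitian_lapMatrix ℝ).map_eigenvalues_eq_of_charpoly_eq_prod hμ).symm

theorem nonneg (v : V) : 0 ≤ μ v := by
  have hmem : μ v ∈ univ.val.map μ := Multiset.mem_map_of_mem _ (mem_univ v)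
  rw [hμ.map_eq] at hmem
  obtain ⟨w, -, hw⟩ := Multiset.mem_map.1 hmem
  exact hw ▸ (G.posSemidef_lapMatrix ℝ).eigenvalues_nonneg w

theorem sum_eq : ∑ v, μ v = 2 * #G.edgeFinset := by
  rw [← trace_lapMatrix, (G.isHermitian_lapMatrix ℝ).trace_eq_sum_eigenvalues,
    sum_eq_multiset_sum, sum_eq_multiset_sum, hμ.map_eq]
  rfl

theorem card_zeros : Fintype.card {v // μ v = 0} = Fintype.card G.ConnectedComponent := by
  rw [← card_zero_eigenvalues_lapMatrix, Fintype.card_subtype_eq_count_map,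
    Fintype.card_subtype_eq_count_map, hμ.map_eq]

theorem eq_of_eq_zero (hG : G.Connected) {v w : V} (hv : μ v = 0) (hw : μ w = 0) : v = w := by
  have hcard : Fintype.card {v // μ v = 0} ≤ 1 := hμ.card_zeros ▸
    Fintype.card_le_one_iff_subsingleton.2 hG.preconnected.subsingleton_connectedComponent
  exact congrArg Subtype.val (Fintype.card_le_one_iff.1 hcard ⟨v, hv⟩ ⟨w, hw⟩)

theorem pos_of_ne (hG : G.Connected) {v w : V} (hw : μ w = 0) (hvw : v ≠ w) : 0 < μ v :=
  (hμ.nonneg v).lt_of_ne' fun hv => hvw (hμ.eq_of_eq_zero hG hv hw)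

end HasLapEigenvalues

end SimpleGraph

/-- For a connected graph `G` on `n ≥ 4` vertices with `m` edges, nonincreasing degree
sequence `d` (a rearrangement of the vertex degrees), nonincreasing Laplacian eigenvalues
`μ₁ ≥ … ≥ μ_n = 0` with `μ₁ ≥ 1 + d₁`, `μ₂ ≥ d₂`, and `(n−2) d₂ ≥ 2m − 1 − d₁`, the
Kirchhoff index `Kf(G) = n ∑_{i=1}^{n−1} 1/μ_i` satisfies
`Kf(G) ≥ n (1/(1+d₁) + 1/d₂ + (n−3)²/(2m−1−d₁−d₂))`. -/
theorem stmt_12 {n : ℕ} (hn : 4 ≤ n) (G : SimpleGraph (Fin n)) [DecidableRel G.Adj]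
    (hconn : G.Connected) (m : ℕ) (hm : m = G.edgeFinset.card)
    (d : Fin n → ℕ) (hda : Antitone d) (μ : Fin n → ℝ)
    (hchar : (SimpleGraph.lapMatrix ℝ G).charpoly =
      ∏ i, (Polynomial.X - Polynomial.C (μ i)))
    (hμn : μ ⟨n - 1, by omega⟩ = 0)
    (hμ1 : (1 : ℝ) + d ⟨0, by omega⟩ ≤ μ ⟨0, by omega⟩)
    (hμ2 : (d ⟨1, by omega⟩ : ℝ) ≤ μ ⟨1, by omega⟩)
    (hd2 : 2 * (m : ℝ) - 1 - d ⟨0, by omega⟩ ≤ ((n : ℝ) - 2) * d ⟨1, by omega⟩) :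
    (n : ℝ) * (1 / ((1 : ℝ) + d ⟨0, by omega⟩) + 1 / (d ⟨1, by omega⟩ : ℝ) +
        ((n : ℝ) - 3) ^ 2 / (2 * (m : ℝ) - 1 - d ⟨0, by omega⟩ - d ⟨1, by omega⟩)) ≤
      (n : ℝ) * ∑ i ∈ Finset.univ.filter (fun i : Fin n => (i : ℕ) < n - 1), 1 / μ i := by
  have hμ : G.HasLapEigenvalues μ := hchar
  have hd₂₁ : (d ⟨1, by omega⟩ : ℝ) ≤ d ⟨0, by omega⟩ := by
    exact_mod_cast hda (Fin.mk_le_mk.2 zero_le_one)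
  have hsum : ∑ i ∈ univ.filter (fun i : Fin n => (i : ℕ) < n - 1), μ i = 2 * m := by
    rw [sum_filter_of_ne fun i _ hi => ?_, hμ.sum_eq, hm]
    contrapose! hi
    exact (Fin.ext (show (i : ℕ) = n - 1 by omega) : i = ⟨n - 1, by omega⟩) ▸ hμn
  rw [Fin.sum_filter_val_lt_pred (by omega)] at hsum ⊢
  set T := Ioo (⟨1, by omega⟩ : Fin n) ⟨n - 1, by omega⟩ with hT
  have hposT (i : Fin n) (hi : i ∈ T) : 0 < μ i :=
    hμ.pos_of_ne hconn hμn (mem_Ioo.1 hi).2.ne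
  have hcard : (#T : ℝ) = n - 3 := by
    rw [Fin.card_Ioo, show n - 1 - 1 - 1 = n - 3 by omega, Nat.cast_sub (by omega)]
    norm_num
  have htail : 0 < ∑ i ∈ T, μ i :=
    sum_pos hposT ⟨⟨2, by omega⟩, by simp only [hT, mem_Ioo, Fin.mk_lt_mk]; omega⟩
  have hcauchy := sq_card_div_sum_le_sum_one_div T hposT
  rw [hcard] at hcauchy
  have hmove := one_div_add_one_div_add_sq_div_le (k := n - 3)
    (by linarith [(by exact_mod_cast hn : (4 : ℝ) ≤ n)]) (by linarith) hμ1 hμ2 htail hsum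
    (by linarith)
  rw [sub_sub (2 * (m : ℝ)) 1]
  exact mul_le_mul_of_nonneg_left (by linarith) (Nat.cast_nonneg n)
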